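/- Suppose events E_0, E_1, ..., E_{H-1} are mutually disjoint with probabilities s_0, ..., s_{H-1}, where s_i ≤ √d · 2^i · D / (2M) for constants D, M > 0, and on event E_i a nonnegative random variable X satisfies X ≤ (√d · 4M / 2^i)², with X = 0 outside all events. If Σ_i s_i ≤ 1 and Σ_{0≤j≤i} s_j ≤ √d·2^{i+1}·D/(2M) for all i, then 3·Σ_{i=0}^{H-1} s_i · (Σ_{0≤j≤i} s_j)² · (√d·4M/2^i)² ≤ 48 d² D². -/

import Mathlib

/-- Core computation bounding the expected squared multi-tree distance: if
`s i ≤ √d·2^i·D/(2M)` for all `i < H`, `Σ_{j≤i} s j ≤ √d·2^{i+1}·D/(2M)` for all `i < H`,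
and `Σ_{i<H} s i ≤ 1`, then
`3·Σ_{i<H} s i · (Σ_{j≤i} s j)² · (√d·4M/2^i)² ≤ 48·d²·D²`. -/
theorem stmt_4 (d H : ℕ) (hd : 1 ≤ d) (D M : ℝ) (hD : 0 < D) (hM : 0 < M)
    (s : ℕ → ℝ) (hs : ∀ i, 0 ≤ s i)
    (hbound : ∀ i < H, s i ≤ Real.sqrt d * 2 ^ i * D / (2 * M))
    (hcum : ∀ i < H, ∑ j ∈ Finset.range (i + 1), s j ≤ Real.sqrt d * 2 ^ (i + 1) * D / (2 * M))
    (htotal : ∑ i ∈ Finset.range H, s i ≤ 1) :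
    3 * ∑ i ∈ Finset.range H,
        s i * (∑ j ∈ Finset.range (i + 1), s j) ^ 2 * (Real.sqrt d * (4 * M) / 2 ^ i) ^ 2 ≤
      48 * (d : ℝ) ^ 2 * D ^ 2 := by
  have key : ∀ i ∈ Finset.range H,
      s i * (∑ j ∈ Finset.range (i + 1), s j) ^ 2 * (Real.sqrt d * (4 * M) / 2 ^ i) ^ 2
        ≤ s i * (16 * (d : ℝ) ^ 2 * D ^ 2) := by
    intro i hi
    rw [Finset.mem_range] at hi
    have hsum0 : 0 ≤ ∑ j ∈ Finset.range (i + 1), s j :=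
      Finset.sum_nonneg fun j _ => hs j
    have h1 : (∑ j ∈ Finset.range (i + 1), s j) ^ 2
        ≤ (Real.sqrt d * 2 ^ (i + 1) * D / (2 * M)) ^ 2 :=
      pow_le_pow_left₀ hsum0 (hcum i hi) 2
    have hpos : 0 ≤ (Real.sqrt d * (4 * M) / 2 ^ i) ^ 2 := sq_nonneg _
    have halg : (Real.sqrt d * 2 ^ (i + 1) * D / (2 * M)) ^ 2
        * (Real.sqrt d * (4 * M) / 2 ^ i) ^ 2 = 16 * (d : ℝ) ^ 2 * D ^ 2 := by
      have hd2 : Real.sqrt d ^ 2 = (d : ℝ) := Real.sq_sqrt (Nat.cast_nonneg d)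
      have h2i : (2 : ℝ) ^ i ≠ 0 := by positivity
      have hMne : M ≠ 0 := hM.ne'
      field_simp
      have hd4 : Real.sqrt d ^ 4 = (d : ℝ) ^ 2 := by
        rw [show (4 : ℕ) = 2 * 2 from rfl, pow_mul, hd2]
      ring_nf
      linear_combination (2 ^ (i * 2) * 64) * hd4
    calc s i * (∑ j ∈ Finset.range (i + 1), s j) ^ 2 * (Real.sqrt d * (4 * M) / 2 ^ i) ^ 2
        ≤ s i * ((Real.sqrt d * 2 ^ (i + 1) * D / (2 * M)) ^ 2
            * (Real.sqrt d * (4 * M) / 2 ^ i) ^ 2) := by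
          rw [mul_assoc]
          exact mul_le_mul_of_nonneg_left (mul_le_mul_of_nonneg_right h1 hpos) (hs i)
      _ = s i * (16 * (d : ℝ) ^ 2 * D ^ 2) := by rw [halg]
  calc 3 * ∑ i ∈ Finset.range H,
        s i * (∑ j ∈ Finset.range (i + 1), s j) ^ 2 * (Real.sqrt d * (4 * M) / 2 ^ i) ^ 2
      ≤ 3 * ∑ i ∈ Finset.range H, s i * (16 * (d : ℝ) ^ 2 * D ^ 2) :=
        mul_le_mul_of_nonneg_left (Finset.sum_le_sum key) (by norm_num)
    _ = 48 * (d : ℝ) ^ 2 * D ^ 2 * ∑ i ∈ Finset.range H, s i := by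
        rw [← Finset.sum_mul]; ring
    _ ≤ 48 * (d : ℝ) ^ 2 * D ^ 2 * 1 :=
        mul_le_mul_of_nonneg_left htotal (by positivity)
    _ = 48 * (d : ℝ) ^ 2 * D ^ 2 := by ring
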